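/- arXiv:2308.08171 — 2 statements merged into one kernel-verified Lean document; each statement's English description precedes it below -/
import Mathlib

section
/- (Existence of an entering variable from the optimal basis.) Consider the linear program min cᵀx subject to Ax = b, l ≤ x ≤ u, with A ∈ ℝ^{m×n}, b ∈ ℝᵐ, and c, l, u ∈ ℝⁿ. Let (B, N_l, N_u) be a basis partition with associated basic solution xᵏ and reduced costs c̄. If x* ∈ ℝⁿ is feasible (A x* = b and l ≤ x* ≤ u) and cᵀxᵏ > cᵀx*, then there exists an index j such that either j ∈ N_l with c̄_j < 0 and x*_j > l_j, or j ∈ N_u with c̄_j > 0 and x*_j < u_j. In particular, this variable j can enter the current basis (its reduced cost has the improving sign) and its status at xᵏ differs from its status at x*. -/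
/-!
Write `y = c_Bᵀ A_B⁻¹` and `c̄ = c - Aᵀy`. Since `A xᵏ = A x* = b`, the objective gap is
`cᵀxᵏ - cᵀx* = c̄ᵀ(xᵏ - x*)`, so some term `c̄_j (xᵏ_j - x*_j)` is positive. It is not a basic
term, because `c̄_B = 0`. For `j ∈ N_l` we have `xᵏ_j - x*_j = l_j - x*_j ≤ 0`, so positivity
forces `c̄_j < 0` and `x*_j > l_j`; symmetrically for `j ∈ N_u`.
-/

open Finset Matrix

variable {R σ ι : Type*} [Fintype σ]

structure IsBasisPartition [Fintype ι] [DecidableEq ι] (B Nl Nu : Finset ι) (basis : σ → ι) :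
    Prop where
  disjoint_basic_lower : Disjoint B Nl
  disjoint_basic_upper : Disjoint B Nu
  disjoint_lower_upper : Disjoint Nl Nu
  union_eq_univ : B ∪ Nl ∪ Nu = univ
  injective : Function.Injective basis
  image_eq : univ.image basis = B

def simplexMultipliers [Semiring R] (c : ι → R) (basis : σ → ι) (ABinv : Matrix σ σ R) :
    σ → R :=
  (c ∘ basis) ᵥ* ABinv

def reducedCosts [Ring R] (A : Matrix σ ι R) (c : ι → R) (y : σ → R) : ι → R :=
  c - y ᵥ* A

namespace IsBasisPartition

variable [Fintype ι] [DecidableEq ι] {B Nl Nu : Finset ι} {basis : σ → ι}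

theorem sum_eq [AddCommMonoid R] (hP : IsBasisPartition B Nl Nu basis) (f : ι → R) :
    ∑ j, f j = ∑ k, f (basis k) + ∑ j ∈ Nl, f j + ∑ j ∈ Nu, f j := by
  rw [← hP.union_eq_univ,
    sum_union (disjoint_union_left.mpr ⟨hP.disjoint_basic_upper, hP.disjoint_lower_upper⟩),
    sum_union hP.disjoint_basic_lower, ← hP.image_eq,
    sum_image fun _ _ _ _ h => hP.injective h]

theorem exists_basis_or_mem (hP : IsBasisPartition B Nl Nu basis) (j : ι) :
    (∃ k, basis k = j) ∨ j ∈ Nl ∨ j ∈ Nu := by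
  have hj : j ∈ B ∪ Nl ∪ Nu := hP.union_eq_univ ▸ mem_univ j
  rw [← hP.image_eq] at hj
  simpa [or_assoc] using hj

theorem mulVec_eq_of_basic [CommRing R] [DecidableEq σ] (hP : IsBasisPartition B Nl Nu basis)
    {A : Matrix σ ι R} {ABinv : Matrix σ σ R} (hAB : A.submatrix id basis * ABinv = 1)
    {b : σ → R} {l u x : ι → R} (hl : ∀ j ∈ Nl, x j = l j) (hu : ∀ j ∈ Nu, x j = u j)
    (hB : ∀ i, x (basis i) =
      ∑ k, ABinv i k * (b k - (∑ j ∈ Nl, A k j * l j) - (∑ j ∈ Nu, A k j * u j))) :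
    A *ᵥ x = b := by
  set r : σ → R := fun k => b k - (∑ j ∈ Nl, A k j * l j) - (∑ j ∈ Nu, A k j * u j)
  have hxB : A.submatrix id basis *ᵥ (x ∘ basis) = r := by
    rw [show x ∘ basis = ABinv *ᵥ r from funext hB, mulVec_mulVec, hAB, one_mulVec]
  funext i
  have hbasic : ∑ k, A i (basis k) * x (basis k) = r i := congrFun hxB i
  have hlower : ∑ j ∈ Nl, A i j * x j = ∑ j ∈ Nl, A i j * l j :=
    sum_congr rfl fun j hj => by rw [hl j hj]
  have hupper : ∑ j ∈ Nu, A i j * x j = ∑ j ∈ Nu, A i j * u j :=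
    sum_congr rfl fun j hj => by rw [hu j hj]
  rw [mulVec, dotProduct, hP.sum_eq, hbasic, hlower, hupper]
  ring

end IsBasisPartition

theorem dotProduct_sub_dotProduct_eq_reducedCosts [Fintype ι] [CommRing R] {A : Matrix σ ι R}
    {x x' : ι → R} (h : A *ᵥ x = A *ᵥ x') (c : ι → R) (y : σ → R) :
    c ⬝ᵥ x - c ⬝ᵥ x' = reducedCosts A c y ⬝ᵥ (x - x') := by
  have hker : A *ᵥ (x - x') = 0 := by rw [mulVec_sub, h, sub_self]
  rw [reducedCosts, sub_dotProduct, ← dotProduct_mulVec, hker, dotProduct_zero, sub_zero,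
    dotProduct_sub]

theorem reducedCosts_basis_eq_zero [CommRing R] [DecidableEq σ] {A : Matrix σ ι R}
    {basis : σ → ι} {ABinv : Matrix σ σ R} (h : ABinv * A.submatrix id basis = 1)
    (c : ι → R) (k : σ) :
    reducedCosts A c (simplexMultipliers c basis ABinv) (basis k) = 0 := by
  have hB : simplexMultipliers c basis ABinv ᵥ* A.submatrix id basis = c ∘ basis := by
    rw [simplexMultipliers, vecMul_vecMul, h, vecMul_one]
  exact sub_eq_zero.mpr (congrFun hB k).symm

theorem lp_entering_variable_exists_general
    (m n : ℕ)
    (A : Matrix (Fin m) (Fin n) ℝ) (b : Fin m → ℝ) (c l u : Fin n → ℝ)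
    -- basis partition (B, Nl, Nu) of {1,…,n}
    (B Nl Nu : Finset (Fin n))
    (hBNl : Disjoint B Nl) (hBNu : Disjoint B Nu) (hNlNu : Disjoint Nl Nu)
    (hcover : B ∪ Nl ∪ Nu = Finset.univ)
    -- the m basic columns, indexed bijectively by Fin m
    (basis : Fin m → Fin n) (hbasis_inj : Function.Injective basis)
    (hbasis_range : Finset.image basis Finset.univ = B)
    -- invertibility of the basic matrix A_B, with inverse ABinv
    (ABinv : Matrix (Fin m) (Fin m) ℝ)
    (hAB_right : ABinv * (Matrix.of fun i k => A i (basis k)) = 1)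
    -- the associated basic solution xᵏ
    (xk : Fin n → ℝ)
    (hxk_l : ∀ j ∈ Nl, xk j = l j)
    (hxk_u : ∀ j ∈ Nu, xk j = u j)
    (hxk_B : ∀ i : Fin m,
      xk (basis i) =
        ∑ k : Fin m, ABinv i k *
          (b k - (∑ j ∈ Nl, A k j * l j) - (∑ j ∈ Nu, A k j * u j)))
    -- the reduced costs c̄_j = c_j − c_Bᵀ A_B⁻¹ A_j
    (cbar : Fin n → ℝ)
    (hcbar : ∀ j : Fin n,
      cbar j = c j - ∑ i : Fin m, (∑ k : Fin m, c (basis k) * ABinv k i) * A i j)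
    -- any x* satisfying A x* = b
    (xstar : Fin n → ℝ)
    (hxstar : ∀ i : Fin m, ∑ j : Fin n, A i j * xstar j = b i)
    (hxstar_lb : ∀ j : Fin n, l j ≤ xstar j)
    (hxstar_ub : ∀ j : Fin n, xstar j ≤ u j)
    (hobj : ∑ j : Fin n, c j * xstar j < ∑ j : Fin n, c j * xk j) :
    ∃ j : Fin n,
      (j ∈ Nl ∧ cbar j < 0 ∧ l j < xstar j) ∨
      (j ∈ Nu ∧ 0 < cbar j ∧ xstar j < u j) := by
  have hP : IsBasisPartition B Nl Nu basis :=
    ⟨hBNl, hBNu, hNlNu, hcover, hbasis_inj, hbasis_range⟩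
  have hcbar' : cbar = reducedCosts A c (simplexMultipliers c basis ABinv) := funext hcbar
  have hAxk : A *ᵥ xk = b :=
    hP.mulVec_eq_of_basic (mul_eq_one_comm.mp hAB_right) hxk_l hxk_u hxk_B
  have hgap : 0 < cbar ⬝ᵥ (xk - xstar) := by
    rw [hcbar', ← dotProduct_sub_dotProduct_eq_reducedCosts (hAxk.trans (funext hxstar).symm)]
    exact sub_pos.mpr hobj
  obtain ⟨j, -, hj⟩ : ∃ j ∈ univ, 0 < cbar j * (xk j - xstar j) :=
    exists_lt_of_sum_lt (sum_const_zero.trans_lt hgap)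
  rcases hP.exists_basis_or_mem j with ⟨k, rfl⟩ | hj_l | hj_u
  · rw [hcbar', reducedCosts_basis_eq_zero hAB_right, zero_mul] at hj
    exact absurd hj (lt_irrefl 0)
  · rw [hxk_l j hj_l] at hj
    have hneg : cbar j < 0 := neg_of_mul_pos_left hj (sub_nonpos.mpr (hxstar_lb j))
    exact ⟨j, .inl ⟨hj_l, hneg, sub_neg.mp (neg_of_mul_pos_right hj hneg.le)⟩⟩
  · rw [hxk_u j hj_u] at hj
    have hpos : 0 < cbar j := pos_of_mul_pos_left hj (sub_nonneg.mpr (hxstar_ub j))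
    exact ⟨j, .inr ⟨hj_u, hpos, sub_pos.mp (pos_of_mul_pos_right hj hpos.le)⟩⟩

/-- **Existence of an entering variable from the optimal basis.**
For the LP `min cᵀx s.t. Ax = b, l ≤ x ≤ u`, let `(B, Nl, Nu)` be a basis
partition with associated basic solution `xk` and reduced costs `cbar`.
If `x*` is feasible (`A x* = b`, `l ≤ x* ≤ u`) and `cᵀxᵏ > cᵀx*`, then there
is an index `j` with either `j ∈ Nl`, `c̄_j < 0`, `x*_j > l_j`, or
`j ∈ Nu`, `c̄_j > 0`, `x*_j < u_j`. -/
theorem lp_entering_variable_exists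
    (m n : ℕ)
    (A : Matrix (Fin m) (Fin n) ℝ) (b : Fin m → ℝ) (c l u : Fin n → ℝ)
    -- basis partition (B, Nl, Nu) of {1,…,n}
    (B Nl Nu : Finset (Fin n))
    (hBNl : Disjoint B Nl) (hBNu : Disjoint B Nu) (hNlNu : Disjoint Nl Nu)
    (hcover : B ∪ Nl ∪ Nu = Finset.univ)
    -- the m basic columns, indexed bijectively by Fin m
    (basis : Fin m → Fin n) (hbasis_inj : Function.Injective basis)
    (hbasis_range : Finset.image basis Finset.univ = B)
    -- invertibility of the basic matrix A_B, with inverse ABinv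
    (ABinv : Matrix (Fin m) (Fin m) ℝ)
    (hAB_left : (Matrix.of fun i k => A i (basis k)) * ABinv = 1)
    (hAB_right : ABinv * (Matrix.of fun i k => A i (basis k)) = 1)
    -- the associated basic solution xᵏ
    (xk : Fin n → ℝ)
    (hxk_l : ∀ j ∈ Nl, xk j = l j)
    (hxk_u : ∀ j ∈ Nu, xk j = u j)
    (hxk_B : ∀ i : Fin m,
      xk (basis i) =
        ∑ k : Fin m, ABinv i k *
          (b k - (∑ j ∈ Nl, A k j * l j) - (∑ j ∈ Nu, A k j * u j)))
    -- the reduced costs c̄_j = c_j − c_Bᵀ A_B⁻¹ A_j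
    (cbar : Fin n → ℝ)
    (hcbar : ∀ j : Fin n,
      cbar j = c j - ∑ i : Fin m, (∑ k : Fin m, c (basis k) * ABinv k i) * A i j)
    -- any x* satisfying A x* = b
    (xstar : Fin n → ℝ)
    (hxstar : ∀ i : Fin m, ∑ j : Fin n, A i j * xstar j = b i)
    (hxstar_lb : ∀ j : Fin n, l j ≤ xstar j)
    (hxstar_ub : ∀ j : Fin n, xstar j ≤ u j)
    (hobj : ∑ j : Fin n, c j * xstar j < ∑ j : Fin n, c j * xk j) :
    ∃ j : Fin n,
      (j ∈ Nl ∧ cbar j < 0 ∧ l j < xstar j) ∨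
      (j ∈ Nu ∧ 0 < cbar j ∧ xstar j < u j) :=
  lp_entering_variable_exists_general m n A b c l u B Nl Nu hBNl hBNu hNlNu hcover basis hbasis_inj
    hbasis_range ABinv hAB_right xk hxk_l hxk_u hxk_B cbar hcbar xstar hxstar hxstar_lb hxstar_ub
    hobj
end

section
/- (Existence of an entering variable, standard form.) Consider the linear program min cᵀx subject to Ax = b, x ≥ 0, with A ∈ ℝ^{m×n}, b ∈ ℝᵐ, c ∈ ℝⁿ. Let B ⊆ {1,…,n} with |B| = m be a basis such that the column submatrix A_B is invertible, and let xᵏ be the associated basic solution (xᵏ_j = 0 for j ∉ B and xᵏ_B = A_B⁻¹ b). If x* ∈ ℝⁿ satisfies A x* = b, x* ≥ 0, and cᵀxᵏ > cᵀx*, then there exists a nonbasic index j ∉ B with reduced cost c̄_j = c_j − c_Bᵀ A_B⁻¹ A_j < 0 and x*_j > 0. -/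
open Finset Matrix

/-!
With the simplex multipliers `y = c_Bᵀ A_B⁻¹` the reduced costs are `c̄ = c - yᵀA`. They vanish on
the basis, and `c̄ᵀx = cᵀx - yᵀb` whenever `Ax = b`, while `cᵀxᵏ = c_Bᵀ A_B⁻¹ b = yᵀb`. Hence
`c̄ᵀx* = cᵀx* - cᵀxᵏ < 0`, so some term `c̄_j x*_j` is negative; as `x* ≥ 0` this forces
`c̄_j < 0 < x*_j`, and `j` is nonbasic because `c̄` vanishes on the basis.
-/

section

variable {ι κ R : Type*}

theorem dotProduct_eq_dotProduct_comp_of_injective [Fintype ι] [Fintype κ] [Semiring R]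
    {e : ι → κ} (he : Function.Injective e) (c x : κ → R) (hx : ∀ j ∉ Set.range e, x j = 0) :
    c ⬝ᵥ x = (c ∘ e) ⬝ᵥ (x ∘ e) :=
  (Fintype.sum_of_injective e he _ _ (fun j hj => by rw [hx j hj, mul_zero]) fun _ => rfl).symm

theorem sub_vecMul_dotProduct_of_mulVec_eq [Fintype ι] [Fintype κ] [Ring R]
    (A : Matrix ι κ R) {b : ι → R} {x : κ → R} (hx : A *ᵥ x = b) (c : κ → R) (y : ι → R) :
    (c - y ᵥ* A) ⬝ᵥ x = c ⬝ᵥ x - y ⬝ᵥ b := by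
  rw [sub_dotProduct, ← dotProduct_mulVec, hx]

theorem sub_vecMul_comp_eq_zero_of_mul_submatrix_eq_one [Fintype ι] [DecidableEq ι] [Ring R]
    (A : Matrix ι κ R) {e : ι → κ} {Binv : Matrix ι ι R} (h : Binv * A.submatrix id e = 1)
    (c : κ → R) : (c - ((c ∘ e) ᵥ* Binv) ᵥ* A) ∘ e = 0 := by
  have hbasic : ((c ∘ e) ᵥ* Binv) ᵥ* A.submatrix id e = c ∘ e := by
    rw [vecMul_vecMul, h, vecMul_one]
  ext k
  exact sub_eq_zero.2 (congrFun hbasic k).symm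

theorem exists_notMem_neg_pos_of_dotProduct_neg [Fintype κ] [Ring R] [LinearOrder R]
    [IsStrictOrderedRing R] {B : Finset κ} {d x : κ → R} (hd : ∀ j ∈ B, d j = 0) (hx : 0 ≤ x)
    (h : d ⬝ᵥ x < 0) :
    ∃ j ∉ B, d j < 0 ∧ 0 < x j := by
  obtain ⟨j, -, hj⟩ : ∃ j ∈ univ, d j * x j < 0 := by
    refine exists_lt_of_sum_lt (g := fun _ => (0 : R)) ?_
    rw [sum_const_zero]
    exact h
  have hdx : d j < 0 ∧ 0 < x j := by
    rcases mul_neg_iff.1 hj with ⟨-, hxj⟩ | hdx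
    · exact absurd (hx j) hxj.not_ge
    · exact hdx
  exact ⟨j, fun hjB => hdx.1.ne (hd j hjB), hdx⟩

end

theorem lp_entering_variable_exists_standard_form_general
    (m n : ℕ)
    (A : Matrix (Fin m) (Fin n) ℝ) (b : Fin m → ℝ) (c : Fin n → ℝ)
    (B : Finset (Fin n))
    (basis : Fin m → Fin n) (hbasis_inj : Function.Injective basis)
    (hbasis_range : Finset.image basis Finset.univ = B)
    (ABinv : Matrix (Fin m) (Fin m) ℝ)
    (hAB_right : ABinv * (Matrix.of fun i k => A i (basis k)) = 1)
    -- the associated basic solution xᵏ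
    (xk : Fin n → ℝ)
    (hxk_nonbasic : ∀ j : Fin n, j ∉ B → xk j = 0)
    (hxk_B : ∀ i : Fin m, xk (basis i) = ∑ k : Fin m, ABinv i k * b k)
    -- the reduced costs c̄_j = c_j − c_Bᵀ A_B⁻¹ A_j
    (cbar : Fin n → ℝ)
    (hcbar : ∀ j : Fin n,
      cbar j = c j - ∑ i : Fin m, (∑ k : Fin m, c (basis k) * ABinv k i) * A i j)
    -- a feasible x* with strictly smaller objective
    (xstar : Fin n → ℝ)
    (hxstar : ∀ i : Fin m, ∑ j : Fin n, A i j * xstar j = b i)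
    (hxstar_nonneg : ∀ j : Fin n, 0 ≤ xstar j)
    (hobj : ∑ j : Fin n, c j * xstar j < ∑ j : Fin n, c j * xk j) :
    ∃ j : Fin n, j ∉ B ∧ cbar j < 0 ∧ 0 < xstar j := by
  set y := (c ∘ basis) ᵥ* ABinv
  have hcbar_eq : cbar = c - y ᵥ* A := funext hcbar
  have hxk_support : ∀ j ∉ Set.range basis, xk j = 0 := fun j hj =>
    hxk_nonbasic j (by simpa [← hbasis_range] using hj)
  have hobj_xk : c ⬝ᵥ xk = y ⬝ᵥ b := by
    rw [dotProduct_eq_dotProduct_comp_of_injective hbasis_inj c xk hxk_support,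
      show xk ∘ basis = ABinv *ᵥ b from funext hxk_B, dotProduct_mulVec]
  have hcbar_xstar : cbar ⬝ᵥ xstar < 0 := by
    rw [hcbar_eq, sub_vecMul_dotProduct_of_mulVec_eq A (funext hxstar), ← hobj_xk]
    exact sub_neg.2 hobj
  refine exists_notMem_neg_pos_of_dotProduct_neg (fun j hj => ?_) hxstar_nonneg hcbar_xstar
  obtain ⟨k, -, rfl⟩ := mem_image.1 (hbasis_range ▸ hj)
  rw [hcbar_eq]
  exact congrFun (sub_vecMul_comp_eq_zero_of_mul_submatrix_eq_one A hAB_right c) k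

/-- **Existence of an entering variable, standard form.**
For the LP `min cᵀx s.t. Ax = b, x ≥ 0`, let `B` be a basis (basic indices
given by the injective map `basis : Fin m → Fin n` with image `B`, and
invertible basic matrix `A_B` with inverse `ABinv`), with associated basic
solution `xᵏ` (`xᵏ_j = 0` for `j ∉ B`, `xᵏ_B = A_B⁻¹ b`).  If `x*` satisfies
`A x* = b`, `x* ≥ 0` and `cᵀxᵏ > cᵀx*`, then there is a nonbasic index `j ∉ B`
with reduced cost `c̄_j = c_j − c_Bᵀ A_B⁻¹ A_j < 0` and `x*_j > 0`. -/
theorem lp_entering_variable_exists_standard_form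
    (m n : ℕ)
    (A : Matrix (Fin m) (Fin n) ℝ) (b : Fin m → ℝ) (c : Fin n → ℝ)
    (B : Finset (Fin n))
    (basis : Fin m → Fin n) (hbasis_inj : Function.Injective basis)
    (hbasis_range : Finset.image basis Finset.univ = B)
    (ABinv : Matrix (Fin m) (Fin m) ℝ)
    (hAB_left : (Matrix.of fun i k => A i (basis k)) * ABinv = 1)
    (hAB_right : ABinv * (Matrix.of fun i k => A i (basis k)) = 1)
    -- the associated basic solution xᵏ
    (xk : Fin n → ℝ)
    (hxk_nonbasic : ∀ j : Fin n, j ∉ B → xk j = 0)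
    (hxk_B : ∀ i : Fin m, xk (basis i) = ∑ k : Fin m, ABinv i k * b k)
    -- the reduced costs c̄_j = c_j − c_Bᵀ A_B⁻¹ A_j
    (cbar : Fin n → ℝ)
    (hcbar : ∀ j : Fin n,
      cbar j = c j - ∑ i : Fin m, (∑ k : Fin m, c (basis k) * ABinv k i) * A i j)
    -- a feasible x* with strictly smaller objective
    (xstar : Fin n → ℝ)
    (hxstar : ∀ i : Fin m, ∑ j : Fin n, A i j * xstar j = b i)
    (hxstar_nonneg : ∀ j : Fin n, 0 ≤ xstar j)
    (hobj : ∑ j : Fin n, c j * xstar j < ∑ j : Fin n, c j * xk j) :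
    ∃ j : Fin n, j ∉ B ∧ cbar j < 0 ∧ 0 < xstar j :=
  lp_entering_variable_exists_standard_form_general m n A b c B basis hbasis_inj hbasis_range ABinv
    hAB_right xk hxk_nonbasic hxk_B cbar hcbar xstar hxstar hxstar_nonneg hobj
end
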